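/- Suppose f is irreducible in ℤ[u^{±1}] and noncyclotomic. Then V_f = {v ∈ ℓ^∞(ℤ,ℤ) : ξ̄*(v) is a bounded sequence}, and ξ̄*(V_f) ⊆ W_f. -/

import Mathlib

open Filter Topology Polynomial

noncomputable section

/-- `f(σ̄)` on real sequences. -/
def fsR (f : Polynomial ℤ) (w : ℤ → ℝ) : ℤ → ℝ :=
  fun n => ∑ k ∈ Finset.range (f.natDegree + 1), (f.coeff k : ℝ) * w (n + (k : ℤ))

/-- Bounded real sequences. -/
def Bdd (w : ℤ → ℝ) : Prop := ∃ B : ℝ, ∀ n, |w n| ≤ B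

/-- Bounded integer sequences. -/
def BddZ (v : ℤ → ℤ) : Prop := ∃ B : ℤ, ∀ n, |v n| ≤ B

/-- The sequence `v^Δ`. -/
def vDelta : ℤ → ℝ := fun n => if n = 0 then 1 else 0

/-- `f` is noncyclotomic. -/
def Noncyclotomic (f : Polynomial ℤ) : Prop :=
  ∀ θ : ℂ, Polynomial.aeval θ f = 0 → ∀ n : ℕ, 0 < n → θ ^ n ≠ 1

/-- `w⁺`. -/
def IsWplus (f : Polynomial ℤ) (w : ℤ → ℝ) : Prop :=
  Bdd w ∧ fsR f w = vDelta ∧ Tendsto w atTop (nhds 0)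

/-- `w⁻`. -/
def IsWminus (f : Polynomial ℤ) (w : ℤ → ℝ) : Prop :=
  Bdd w ∧ fsR f w = vDelta ∧ Tendsto w atBot (nhds 0)

/-- `ξ̄*(v)_k = ∑_{n≥0} v_n w⁻_{k-n} + ∑_{n<0} v_n w⁺_{k-n}`. -/
def xiStar (wp wm : ℤ → ℝ) (v : ℤ → ℤ) : ℤ → ℝ :=
  fun k => ∑' n : ℤ, (v n : ℝ) * (if 0 ≤ n then wm (k - n) else wp (k - n))

/-- Membership in `W_f = f(σ̄)^{-1}(ℓ^∞(ℤ,ℤ)) ⊆ ℓ^∞(ℤ,ℝ)`. -/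
def InWf (f : Polynomial ℤ) (w : ℤ → ℝ) : Prop :=
  Bdd w ∧ ∀ n, ∃ z : ℤ, fsR f w n = (z : ℝ)

/-- Membership in `V_f = f(σ̄)(W_f)` for an integer sequence. -/
def InVf (f : Polynomial ℤ) (v : ℤ → ℤ) : Prop :=
  ∃ w : ℤ → ℝ, Bdd w ∧ ∀ n, fsR f w n = (v n : ℝ)

/-!
Off the index `0`, `w⁺` satisfies the recurrence `f(σ̄) w = 0` on `[1, ∞)` and `w⁻` on
`(-∞, -1]`, and they tend to `0` there. Factoring `f` over `ℂ` splits such a recurrence into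
first-order ones `y (n+1) = μ y n + z n`, each of which transfers exponential decay from `z` to a
null sequence `y`; so `w⁺` and `w⁻` are summable on those half-lines, and every row of the
kernel of `ξ̄*` is absolutely summable.

Hence `f(σ̄)` can be moved inside the series defining `ξ̄*`; as every column of the kernel is a
translate of `w⁺` or `w⁻`, this gives `f(σ̄) ξ̄*(v) = v` for bounded `v`, so `ξ̄*(v) ∈ W_f` as
soon as it is bounded. Conversely, for `v = f(σ̄) w` with `w` bounded, moving `f(σ̄)` onto the
kernel turns `ξ̄*(v)_k` into `∑ₘ w m h_k(m)` with `h_k(m) = δ_{km}` outside `0 ≤ m < deg f`,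
a sum of at most `deg f + 1` uniformly bounded terms.
-/

open Finset

section Shift

variable (R : Type*) [CommSemiring R]

def seqShift : Module.End R (ℕ → R) := LinearMap.funLeft R R (· + 1)

variable {R}

theorem seqShift_pow_apply (i : ℕ) (x : ℕ → R) (n : ℕ) : (seqShift R ^ i) x n = x (n + i) := by
  induction i generalizing x with
  | zero => rfl
  | succ i ih => rw [pow_succ, Module.End.mul_apply, ih]; rfl

theorem aeval_seqShift_apply (p : R[X]) {N : ℕ} (hN : p.natDegree < N) (x : ℕ → R) (n : ℕ) :
    aeval (seqShift R) p x n = ∑ j ∈ range N, p.coeff j * x (n + j) := by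
  simp [aeval_eq_sum_range' hN, seqShift_pow_apply]

theorem tendsto_aeval_seqShift [TopologicalSpace R] [IsTopologicalSemiring R] (p : R[X])
    {x : ℕ → R} (hx : Tendsto x atTop (𝓝 0)) :
    Tendsto (aeval (seqShift R) p x) atTop (𝓝 0) := by
  have h := tendsto_finsetSum (range (p.natDegree + 1)) fun j _ =>
    (hx.comp (tendsto_add_atTop_nat j)).const_mul (p.coeff j)
  simp only [Function.comp_def, mul_zero, sum_const_zero] at h
  exact h.congr fun n => (aeval_seqShift_apply p (Nat.lt_succ_self _) x n).symm

end Shift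

def ExpDecay {E : Type*} [Norm E] (x : ℕ → E) : Prop :=
  ∃ C r : ℝ, 0 ≤ r ∧ r < 1 ∧ ∀ n, ‖x n‖ ≤ C * r ^ n

theorem ExpDecay.summable {E : Type*} [NormedAddCommGroup E] [CompleteSpace E] {x : ℕ → E}
    (hx : ExpDecay x) : Summable x := by
  obtain ⟨C, r, hr0, hr1, hb⟩ := hx
  exact ((summable_geometric_of_lt_one hr0 hr1).mul_left C).of_norm_bounded hb

section Recurrence

variable {𝕜 : Type*} [NormedField 𝕜] {μ : 𝕜} {x y z : ℕ → 𝕜}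

theorem ExpDecay.of_succ_eq_of_norm_lt_one (hμ : ‖μ‖ < 1)
    (hrel : ∀ n, y (n + 1) = μ * y n + z n) (hz : ExpDecay z) : ExpDecay y := by
  obtain ⟨C, r, hr0, hr1, hb⟩ := hz
  have hC : 0 ≤ C := by simpa using (norm_nonneg _).trans (hb 0)
  set s := max r ((‖μ‖ + 1) / 2)
  have hμs : ‖μ‖ < s := lt_max_of_lt_right (by linarith)
  set A := max ‖y 0‖ (C / (s - ‖μ‖))
  have hA : C ≤ A * (s - ‖μ‖) := (div_le_iff₀ (by linarith)).1 (le_max_right _ _)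
  refine ⟨A, s, hr0.trans (le_max_left _ _), max_lt hr1 (by linarith), fun n => ?_⟩
  induction n with
  | zero => simp [A]
  | succ n ih =>
    have hzn : ‖z n‖ ≤ C * s ^ n :=
      (hb n).trans (by gcongr; exact le_max_left _ _)
    calc ‖y (n + 1)‖ ≤ ‖μ‖ * ‖y n‖ + ‖z n‖ := by
          rw [hrel, ← norm_mul]; exact norm_add_le _ _
      _ ≤ ‖μ‖ * (A * s ^ n) + C * s ^ n := by gcongr
      _ ≤ A * s ^ (n + 1) := by
          have : 0 ≤ s ^ n := pow_nonneg (hr0.trans (le_max_left _ _)) n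
          rw [pow_succ]; nlinarith

theorem ExpDecay.of_succ_eq_of_one_le_norm (hμ : 1 ≤ ‖μ‖) (hy : Tendsto y atTop (𝓝 0))
    (hrel : ∀ n, y (n + 1) = μ * y n + z n) (hz : ExpDecay z) : ExpDecay y := by
  obtain ⟨C, r, hr0, hr1, hb⟩ := hz
  have hC : 0 ≤ C := by simpa using (norm_nonneg _).trans (hb 0)
  -- backwards, `y n = (y (n + 1) - z n) / μ`, so the error terms telescope
  have hback : ∀ n, ‖y n‖ ≤ ‖y (n + 1)‖ + ‖z n‖ := fun n => by
    have hμ0 : μ ≠ 0 := norm_pos_iff.1 (one_pos.trans_le hμ)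
    calc ‖y n‖ ≤ ‖μ‖ * ‖y n‖ := le_mul_of_one_le_left (norm_nonneg _) hμ
      _ = ‖y (n + 1) - z n‖ := by rw [← norm_mul, hrel, add_sub_cancel_right]
      _ ≤ ‖y (n + 1)‖ + ‖z n‖ := norm_sub_le _ _
  have htail : ∀ n k, n ≤ k → ‖y n‖ ≤ ‖y k‖ + C * (r ^ n / (1 - r)) := by
    intro n k hnk
    have : ‖y n‖ ≤ ‖y k‖ + ∑ i ∈ Ico n k, ‖z i‖ := by
      induction k, hnk using Nat.le_induction with
      | base => simp
      | succ k hnk ih =>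
        rw [sum_Ico_succ_top hnk]; linarith [hback k]
    calc ‖y n‖ ≤ ‖y k‖ + ∑ i ∈ Ico n k, ‖z i‖ := this
      _ ≤ ‖y k‖ + C * ∑ i ∈ Ico n k, r ^ i := by
          rw [mul_sum]; gcongr with i; exact hb i
      _ ≤ ‖y k‖ + C * (r ^ n / (1 - r)) := by
          gcongr; exact geom_sum_Ico_le_of_lt_one hr0 hr1
  refine ⟨C / (1 - r), r, hr0, hr1, fun n => ?_⟩
  have hlim : Tendsto (fun k => ‖y k‖ + C * (r ^ n / (1 - r))) atTop
      (𝓝 (0 + C * (r ^ n / (1 - r)))) :=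
    (tendsto_zero_iff_norm_tendsto_zero.1 hy).add_const _
  calc ‖y n‖ ≤ 0 + C * (r ^ n / (1 - r)) :=
        ge_of_tendsto hlim (eventually_atTop.2 ⟨n, htail n⟩)
    _ = C / (1 - r) * r ^ n := by ring

theorem ExpDecay.of_succ_eq (hy : Tendsto y atTop (𝓝 0))
    (hrel : ∀ n, y (n + 1) = μ * y n + z n) (hz : ExpDecay z) : ExpDecay y := by
  rcases lt_or_ge ‖μ‖ 1 with hμ | hμ
  · exact .of_succ_eq_of_norm_lt_one hμ hrel hz
  · exact .of_succ_eq_of_one_le_norm hμ hy hrel hz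

theorem ExpDecay.of_aeval_prod_X_sub_C (s : Multiset 𝕜) (hx : Tendsto x atTop (𝓝 0))
    (h : ExpDecay (aeval (seqShift 𝕜) (s.map fun μ => X - C μ).prod x)) : ExpDecay x := by
  induction s using Multiset.induction_on with
  | empty => simpa using h
  | cons μ s ih =>
    refine ih (.of_succ_eq (μ := μ) (tendsto_aeval_seqShift _ hx) (fun n => ?_) h)
    simp only [Multiset.map_cons, Multiset.prod_cons, map_mul, Module.End.mul_apply, map_sub,
      aeval_X, aeval_C, LinearMap.sub_apply, Module.algebraMap_end_apply, Pi.sub_apply,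
      Pi.smul_apply, smul_eq_mul]
    rw [seqShift, LinearMap.funLeft_apply]
    ring

theorem ExpDecay.of_aeval_seqShift_eq_zero [IsAlgClosed 𝕜] {p : 𝕜[X]} (hp : p ≠ 0)
    (hx : Tendsto x atTop (𝓝 0)) (h : aeval (seqShift 𝕜) p x = 0) : ExpDecay x := by
  rw [← C_leadingCoeff_mul_prod_multiset_X_sub_C (IsAlgClosed.card_roots_eq_natDegree (p := p)),
    map_mul, aeval_C, Module.End.mul_apply, Module.algebraMap_end_apply, smul_eq_zero] at h
  refine .of_aeval_prod_X_sub_C p.roots hx ?_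
  rw [h.resolve_left (leadingCoeff_ne_zero.2 hp)]
  exact ⟨0, 0, le_rfl, zero_lt_one, by simp⟩

end Recurrence

theorem summable_of_tendsto_zero_of_recurrence {p : ℝ[X]} (hp : p ≠ 0) {N : ℕ}
    (hN : p.natDegree < N) {x : ℕ → ℝ} (hx : Tendsto x atTop (𝓝 0))
    (hrec : ∀ n, ∑ j ∈ range N, p.coeff j * x (n + j) = 0) : Summable x := by
  set q := p.map Complex.ofRealHom
  have hq : q.natDegree < N := natDegree_map_le.trans_lt hN
  refine Complex.summable_ofReal.1
    (ExpDecay.summable (.of_aeval_seqShift_eq_zero (p := q) ?_ ?_ ?_))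
  · exact (Polynomial.map_ne_zero_iff Complex.ofRealHom.injective).2 hp
  · exact (Complex.continuous_ofReal.tendsto' 0 0 Complex.ofReal_zero).comp hx
  · funext n
    rw [aeval_seqShift_apply q hq]
    simp only [q, coeff_map, Complex.ofRealHom_eq_coe, Pi.zero_apply]
    exact_mod_cast hrec n

theorem ne_zero_of_fsR_eq_vDelta {f : ℤ[X]} {w : ℤ → ℝ} (h : fsR f w = vDelta) : f ≠ 0 := by
  rintro rfl
  simpa [fsR, vDelta] using congrFun h 0

theorem IsWplus.summable_nat_add {f : ℤ[X]} {wp : ℤ → ℝ} (hwp : IsWplus f wp) (a : ℤ) :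
    Summable fun n : ℕ => wp (a + n) := by
  obtain ⟨-, hf, hlim⟩ := hwp
  obtain ⟨b, hab, hb1⟩ : ∃ b, a ≤ b ∧ 1 ≤ b := ⟨max a 1, le_max_left _ _, le_max_right _ _⟩
  have hb : Summable fun n : ℕ => wp (b + n) := by
    refine summable_of_tendsto_zero_of_recurrence (p := f.map (Int.castRingHom ℝ))
      ((Polynomial.map_ne_zero_iff (RingHom.injective_int _)).2 (ne_zero_of_fsR_eq_vDelta hf))
      (natDegree_map_le.trans_lt f.natDegree.lt_succ_self) ?_ fun n => ?_
    · exact hlim.comp (tendsto_atTop_add_const_left _ b tendsto_natCast_atTop_atTop)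
    · have h := congrFun hf (b + n)
      simp only [fsR, vDelta, if_neg (by omega : b + n ≠ 0)] at h
      simpa [add_assoc] using h
  refine (summable_nat_add_iff (b - a).toNat).1 (hb.congr fun n => ?_)
  congr 1
  omega

theorem IsWminus.summable_sub_nat {f : ℤ[X]} {wm : ℤ → ℝ} (hwm : IsWminus f wm) (a : ℤ) :
    Summable fun n : ℕ => wm (a - n) := by
  obtain ⟨-, hf, hlim⟩ := hwm
  obtain ⟨b, hba, hb1⟩ : ∃ b, b ≤ a ∧ b ≤ -1 := ⟨min a (-1), min_le_left _ _, min_le_right _ _⟩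
  set d := f.natDegree
  have hb : Summable fun n : ℕ => wm (b - n) := by
    refine summable_of_tendsto_zero_of_recurrence (p := (f.map (Int.castRingHom ℝ)).reflect d)
      (N := d + 1) ?_ ?_ ?_ fun n => ?_
    · rw [Ne, reflect_eq_zero_iff]
      exact (Polynomial.map_ne_zero_iff (RingHom.injective_int _)).2 (ne_zero_of_fsR_eq_vDelta hf)
    · exact Nat.lt_succ_of_le (natDegree_reflect_le.trans (max_le le_rfl natDegree_map_le))
    · exact hlim.comp (tendsto_atBot_add_const_left _ b
        (tendsto_neg_atTop_atBot.comp tendsto_natCast_atTop_atTop))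
    · have h := congrFun hf (b - n - d)
      simp only [fsR, vDelta, if_neg (by omega : b - n - d ≠ 0)] at h
      rw [← sum_range_reflect, ← h]
      refine sum_congr rfl fun j hj => ?_
      have hj : j ≤ d := Nat.lt_succ_iff.1 (mem_range.1 hj)
      rw [coeff_reflect, Nat.add_sub_cancel, revAt_le (Nat.sub_le d j), Nat.sub_sub_self hj,
        coeff_map, eq_intCast]
      congr 2
      push_cast
      omega
  refine (summable_nat_add_iff (a - b).toNat).1 (hb.congr fun n => ?_)
  congr 1
  omega

theorem Summable.mul_left_of_bounded {ι : Type*} {a g : ι → ℝ} {B : ℝ} (hg : Summable g)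
    (ha : ∀ i, |a i| ≤ B) : Summable fun i => a i * g i :=
  (hg.abs.mul_left B).of_norm_bounded fun i => by
    rw [Real.norm_eq_abs, abs_mul]
    exact mul_le_mul_of_nonneg_right (ha i) (abs_nonneg _)

section FsR

variable (f : ℤ[X])

theorem fsR_comp_sub (w : ℤ → ℝ) (m n : ℤ) :
    fsR f (fun k => w (k - m)) n = fsR f w (n - m) :=
  sum_congr rfl fun j _ => by ring_nf

theorem fsR_const_mul (c : ℝ) (w : ℤ → ℝ) (n : ℤ) :
    fsR f (fun k => c * w k) n = c * fsR f w n := by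
  rw [fsR, fsR, mul_sum]
  exact sum_congr rfl fun j _ => by ring

theorem fsR_tsum {F : ℤ → ℤ → ℝ} (hF : ∀ k, Summable (F k)) (n : ℤ) :
    fsR f (fun k => ∑' m, F k m) n = ∑' m, fsR f (fun k => F k m) n := by
  simp only [fsR, ← tsum_mul_left]
  exact (Summable.tsum_finsetSum fun j _ => (hF _).mul_left _).symm

theorem tsum_fsR_mul {w g : ℤ → ℝ} {B : ℝ} (hw : ∀ n, |w n| ≤ B) (hg : Summable g) :
    ∑' m, fsR f w m * g m =
      ∑' m, w m * ∑ j ∈ range (f.natDegree + 1), f.coeff j * g (m - j) := by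
  have hsum : ∀ j : ℕ, Summable fun m => w m * g (m - j) := fun j =>
    ((Equiv.subRight (j : ℤ)).summable_iff.2 hg).mul_left_of_bounded hw
  calc ∑' m, fsR f w m * g m
      = ∑ j ∈ range (f.natDegree + 1), ∑' m, f.coeff j * (w (m + j) * g m) := by
        simp only [fsR, sum_mul, mul_assoc]
        exact Summable.tsum_finsetSum fun j _ =>
          ((hg.mul_left_of_bounded fun m => hw (m + j)).mul_left _)
    _ = ∑ j ∈ range (f.natDegree + 1), ∑' m, f.coeff j * (w m * g (m - j)) := by
        refine sum_congr rfl fun j _ => ?_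
        rw [← (Equiv.addRight (j : ℤ)).tsum_eq fun m => _ * (w m * g (m - j))]
        simp only [Equiv.coe_addRight, add_sub_cancel_right]
    _ = ∑' m, w m * ∑ j ∈ range (f.natDegree + 1), f.coeff j * g (m - j) := by
        rw [← Summable.tsum_finsetSum fun j _ => (hsum j).mul_left _]
        simp only [mul_sum, mul_left_comm]

end FsR

def xiKernel (wp wm : ℤ → ℝ) (k n : ℤ) : ℝ := if 0 ≤ n then wm (k - n) else wp (k - n)

theorem xiStar_apply (wp wm : ℤ → ℝ) (v : ℤ → ℤ) (k : ℤ) :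
    xiStar wp wm v k = ∑' n, (v n : ℝ) * xiKernel wp wm k n := rfl

section Kernel

variable {f : ℤ[X]} {wp wm : ℤ → ℝ}

theorem summable_xiKernel (hwp : IsWplus f wp) (hwm : IsWminus f wm) (k : ℤ) :
    Summable (xiKernel wp wm k) := by
  refine .of_nat_of_neg_add_one ((hwm.summable_sub_nat k).congr fun n => ?_)
    ((hwp.summable_nat_add (k + 1)).congr fun n => ?_)
  · simp [xiKernel]
  · rw [xiKernel, if_neg (by omega)]
    congr 1
    ring

theorem abs_xiKernel_le {Bp Bm : ℝ} (hp : ∀ n, |wp n| ≤ Bp) (hm : ∀ n, |wm n| ≤ Bm) (k n : ℤ) :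
    |xiKernel wp wm k n| ≤ max Bp Bm := by
  unfold xiKernel
  split_ifs
  · exact le_max_of_le_right (hm _)
  · exact le_max_of_le_left (hp _)

-- Each column of the kernel is a translate of `w⁻` or of `w⁺`.
theorem fsR_xiKernel (hwp : IsWplus f wp) (hwm : IsWminus f wm) (m n : ℤ) :
    fsR f (fun k => xiKernel wp wm k m) n = vDelta (n - m) := by
  by_cases hm : 0 ≤ m
  · simp only [xiKernel, if_pos hm]
    rw [fsR_comp_sub, hwm.2.1]
  · simp only [xiKernel, if_neg hm]
    rw [fsR_comp_sub, hwp.2.1]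

theorem sum_coeff_mul_xiKernel_sub (hwp : IsWplus f wp) (hwm : IsWminus f wm) {k m : ℤ}
    (hm : m < 0 ∨ f.natDegree ≤ m) :
    ∑ j ∈ range (f.natDegree + 1), f.coeff j * xiKernel wp wm k (m - j) = vDelta (k - m) := by
  rcases hm with hm | hm
  · rw [← hwp.2.1]
    refine sum_congr rfl fun j _ => ?_
    rw [xiKernel, if_neg (by omega)]
    congr 2
    ring
  · rw [← hwm.2.1]
    refine sum_congr rfl fun j hj => ?_
    have := mem_range.1 hj
    rw [xiKernel, if_pos (by omega)]
    congr 2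
    ring

theorem fsR_xiStar (hwp : IsWplus f wp) (hwm : IsWminus f wm) {v : ℤ → ℤ} (hv : BddZ v)
    (n : ℤ) : fsR f (xiStar wp wm v) n = v n := by
  obtain ⟨B, hB⟩ := hv
  have hsum : ∀ k, Summable fun m => (v m : ℝ) * xiKernel wp wm k m := fun k =>
    (summable_xiKernel hwp hwm k).mul_left_of_bounded (B := B) fun m => by exact_mod_cast hB m
  calc fsR f (xiStar wp wm v) n
      = ∑' m, fsR f (fun k => (v m : ℝ) * xiKernel wp wm k m) n := fsR_tsum f hsum n
    _ = ∑' m, (v m : ℝ) * vDelta (n - m) := by simp only [fsR_const_mul, fsR_xiKernel hwp hwm]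
    _ = v n := by
        rw [tsum_eq_single n fun m hm => by simp [vDelta, sub_eq_zero, Ne.symm hm]]
        simp [vDelta]

theorem bdd_xiStar_of_inVf (hwp : IsWplus f wp) (hwm : IsWminus f wm) {v : ℤ → ℤ}
    (hv : InVf f v) : Bdd (xiStar wp wm v) := by
  obtain ⟨w, ⟨B, hB⟩, hfw⟩ := hv
  obtain ⟨Bp, hBp⟩ := hwp.1
  obtain ⟨Bm, hBm⟩ := hwm.1
  set d := f.natDegree
  set K := (∑ j ∈ range (d + 1), |(f.coeff j : ℝ)|) * max Bp Bm with hK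
  refine ⟨(d + 1) * (B * K), fun k => ?_⟩
  set h : ℤ → ℝ := fun m => ∑ j ∈ range (d + 1), f.coeff j * xiKernel wp wm k (m - j)
  have hh : ∀ m, |h m| ≤ K := fun m => by
    refine (abs_sum_le_sum_abs _ _).trans ?_
    rw [hK, sum_mul]
    refine sum_le_sum fun j _ => ?_
    rw [abs_mul]
    exact mul_le_mul_of_nonneg_left (abs_xiKernel_le hBp hBm _ _) (abs_nonneg _)
  have hsupp : ∀ m ∉ Ico 0 (d : ℤ) ∪ {k}, w m * h m = 0 := fun m hm => by
    simp only [mem_union, mem_Ico, mem_singleton, not_or, not_and_or, not_le, not_lt] at hm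
    rw [show h m = vDelta (k - m) from sum_coeff_mul_xiKernel_sub hwp hwm (by omega), vDelta,
      if_neg (by omega), mul_zero]
  have hxi : xiStar wp wm v k = ∑ m ∈ Ico 0 (d : ℤ) ∪ {k}, w m * h m := by
    simp only [xiStar_apply, ← hfw]
    rw [tsum_fsR_mul f hB (summable_xiKernel hwp hwm k)]
    exact tsum_eq_sum hsupp
  have hcard : ((Ico 0 (d : ℤ) ∪ {k}).card : ℝ) ≤ d + 1 := by
    exact_mod_cast (card_union_le _ _).trans (by simp)
  have hB0 : 0 ≤ B := (abs_nonneg _).trans (hB 0)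
  calc |xiStar wp wm v k| ≤ ∑ m ∈ Ico 0 (d : ℤ) ∪ {k}, B * K := by
        rw [hxi]
        refine (abs_sum_le_sum_abs _ _).trans (sum_le_sum fun m _ => ?_)
        rw [abs_mul]
        exact mul_le_mul (hB m) (hh m) (abs_nonneg _) hB0
    _ ≤ (d + 1) * (B * K) := by
        rw [sum_const, nsmul_eq_mul]
        exact mul_le_mul_of_nonneg_right hcard (mul_nonneg hB0 ((abs_nonneg _).trans (hh 0)))

end Kernel

theorem Vf_eq_bounded_xiStar_general (f : Polynomial ℤ)
    (wp wm : ℤ → ℝ) (hwp : IsWplus f wp) (hwm : IsWminus f wm) :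
    (∀ v : ℤ → ℤ, BddZ v → (InVf f v ↔ Bdd (xiStar wp wm v))) ∧
    (∀ v : ℤ → ℤ, BddZ v → InVf f v → InWf f (xiStar wp wm v)) :=
  ⟨fun _ hv => ⟨bdd_xiStar_of_inVf hwp hwm, fun hb => ⟨_, hb, fsR_xiStar hwp hwm hv⟩⟩,
    fun v hv hVf => ⟨bdd_xiStar_of_inVf hwp hwm hVf, fun n => ⟨v n, fsR_xiStar hwp hwm hv n⟩⟩⟩

/-- `V_f = {v ∈ ℓ^∞(ℤ,ℤ) : ξ̄*(v) ∈ ℓ^∞(ℤ,ℝ)}` and `ξ̄*(V_f) ⊆ W_f`. -/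
theorem Vf_eq_bounded_xiStar (f : Polynomial ℤ) (hm : 1 ≤ f.natDegree)
    (hlead : 0 < f.leadingCoeff) (h0 : f.coeff 0 ≠ 0)
    (hirr : Irreducible (Polynomial.toLaurent f)) (hnc : Noncyclotomic f)
    (wp wm : ℤ → ℝ) (hwp : IsWplus f wp) (hwm : IsWminus f wm) :
    (∀ v : ℤ → ℤ, BddZ v → (InVf f v ↔ Bdd (xiStar wp wm v))) ∧
    (∀ v : ℤ → ℤ, BddZ v → InVf f v → InWf f (xiStar wp wm v)) :=
  Vf_eq_bounded_xiStar_general f wp wm hwp hwm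

end
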